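/- arXiv:1801.03367 — 2 statements merged into one kernel-verified Lean document; each statement's English description precedes it below -/
import Mathlib

section
/- Monotonicity of lower-abstraction values under giving choice to the minimizer: Let (G, u) be a finite concurrent two-player zero-sum game and Π a compatible partition with lower abstraction (G↓, u↓). Then for every strategy of player 1 in G↓ obtained by following a player-1 strategy of G through corresponding histories, the guaranteed value in G↓ is at most the guaranteed value of the original strategy in G; consequently υ_{2L}(G↓, u↓) ≤ υ_L(G, u). -/
open scoped BigOperators

/-- A finite concurrent two-player game structure `(S, s0, A, Γ1, Γ2, δ)`. -/
structure ConcGame where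
  S : Type
  A : Type
  [fS : Fintype S]
  [dS : DecidableEq S]
  [fA : Fintype A]
  [dA : DecidableEq A]
  s0 : S
  act1 : S → Finset A
  act2 : S → Finset A
  h1 : ∀ s, (act1 s).Nonempty
  h2 : ∀ s, (act2 s).Nonempty
  tr : S → A → A → S

attribute [instance] ConcGame.fS ConcGame.dS ConcGame.fA ConcGame.dA

/-- A history: a finite sequence of (state, action pair) tuples. -/
abbrev Hist (G : ConcGame) := List (G.S × G.A × G.A)

/-- Mixed (history-dependent) strategies for available-action map `act`:
after every history and at every state, a probability distribution
supported on the available actions. -/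
def Strat (G : ConcGame) (act : G.S → Finset G.A) : Set (Hist G → G.S → G.A → ℝ) :=
  {σ | ∀ h s, (∀ a, 0 ≤ σ h s a) ∧ (∑ a ∈ act s, σ h s a = 1) ∧
        ∀ a ∉ act s, σ h s a = 0}

/-- Expected cumulative `L`-step utility of the mixed strategy profile `(σ1, σ2)`
starting at state `s` with current history `h`. -/
noncomputable def expVal (G : ConcGame) (u : G.S → ℝ)
    (σ1 σ2 : Hist G → G.S → G.A → ℝ) : ℕ → G.S → Hist G → ℝ
  | 0, _, _ => 0
  | (L + 1), s, h =>
      u s + ∑ a1 ∈ G.act1 s, ∑ a2 ∈ G.act2 s,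
        σ1 h s a1 * σ2 h s a2 *
          expVal G u σ1 σ2 L (G.tr s a1 a2) (h ++ [(s, a1, a2)])

/-- The `L`-step finite-horizon value of the game started at state `s`:
`sup` over player-1 mixed strategies of `inf` over player-2 mixed strategies
of the expected cumulative utility. -/
noncomputable def valFrom (G : ConcGame) (u : G.S → ℝ) (L : ℕ) (s : G.S) : ℝ :=
  ⨆ σ1 : Strat G G.act1, ⨅ σ2 : Strat G G.act2, expVal G u σ1.1 σ2.1 L s []

/-- The `L`-step finite-horizon value `υ_L(G, u)` of the game. -/
noncomputable def gval (G : ConcGame) (u : G.S → ℝ) (L : ℕ) : ℝ :=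
  valFrom G u L G.s0

/-- The partition induced by a setoid is compatible with the game's action sets:
equivalent states have identical available-action sets for both players. -/
def Compatible (G : ConcGame) (r : Setoid G.S) : Prop :=
  ∀ s s', r.r s s' → G.act1 s = G.act1 s' ∧ G.act2 s = G.act2 s'

section Abstraction

open Classical

variable (G : ConcGame) (r : Setoid G.S)

/-- The partition class (as a set of original states) of an abstract state `q`. -/
def classOf (q : Quotient r) : Set G.S := {s | Quotient.mk r s = q}

/-- State space of the abstracted games: partition classes plus dummy states
`(class, action, action)`. -/
abbrev AbsS := Quotient r ⊕ (Quotient r × G.A × G.A)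

/-- Action space of the abstracted games: original actions, plus choices of a
successor class at dummy states. -/
abbrev AbsA := G.A ⊕ Quotient r

/-- The finset of successor classes reachable from some state of class `π`
under the action pair `(a1, a2)` (the set `X_d` for dummy state `d = (π,a1,a2)`). -/
noncomputable def succClasses (π : Quotient r) (a1 a2 : G.A) : Finset (Quotient r) :=
  letI : DecidableEq (Quotient r) := Classical.decEq _
  letI : Fintype (Quotient r) := Fintype.ofFinite _
  (Finset.univ.filter (fun s => Quotient.mk r s = π)).image
    (fun s => Quotient.mk r (G.tr s a1 a2))

lemma succClasses_nonempty (π : Quotient r) (a1 a2 : G.A) :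
    (succClasses G r π a1 a2).Nonempty := by
  classical
  refine ⟨Quotient.mk r (G.tr (Quotient.out π) a1 a2), ?_⟩
  unfold succClasses
  simp only [Finset.mem_image, Finset.mem_filter, Finset.mem_univ, true_and]
  exact ⟨Quotient.out π, Quotient.out_eq π, rfl⟩

/-- The lower abstraction `G↓` of `G` with respect to the partition induced by `r`:
transitions from a class go to the corresponding dummy state, and at dummy states
player 2 (the minimizer) alone chooses the successor class. -/
noncomputable def lowerAbs : ConcGame :=
  letI : DecidableEq (Quotient r) := Classical.decEq _
  letI : Fintype (Quotient r) := Fintype.ofFinite _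
  { S := AbsS G r
    A := AbsA G r
    s0 := Sum.inl (Quotient.mk r G.s0)
    act1 := fun s => match s with
      | Sum.inl q => (G.act1 (Quotient.out q)).image Sum.inl
      | Sum.inr d => {Sum.inr d.1}
    act2 := fun s => match s with
      | Sum.inl q => (G.act2 (Quotient.out q)).image Sum.inl
      | Sum.inr d => (succClasses G r d.1 d.2.1 d.2.2).image Sum.inr
    h1 := by
      rintro (q | d)
      · exact (G.h1 _).image _
      · exact Finset.singleton_nonempty _
    h2 := by
      rintro (q | d)
      · exact (G.h2 _).image _
      · exact (succClasses_nonempty G r d.1 d.2.1 d.2.2).image _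
    tr := fun s a1 a2 => match s, a1, a2 with
      | Sum.inl q, Sum.inl b1, Sum.inl b2 => Sum.inr (q, b1, b2)
      | Sum.inl q, _, _ => Sum.inl q
      | Sum.inr d, _, Sum.inr π' => Sum.inl π'
      | Sum.inr d, _, _ => Sum.inl d.1 }

/-- The upper abstraction `G↑` of `G` with respect to the partition induced by `r`:
transitions from a class go to the corresponding dummy state, and at dummy states
player 1 (the maximizer) alone chooses the successor class. -/
noncomputable def upperAbs : ConcGame :=
  letI : DecidableEq (Quotient r) := Classical.decEq _
  letI : Fintype (Quotient r) := Fintype.ofFinite _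
  { S := AbsS G r
    A := AbsA G r
    s0 := Sum.inl (Quotient.mk r G.s0)
    act1 := fun s => match s with
      | Sum.inl q => (G.act1 (Quotient.out q)).image Sum.inl
      | Sum.inr d => (succClasses G r d.1 d.2.1 d.2.2).image Sum.inr
    act2 := fun s => match s with
      | Sum.inl q => (G.act2 (Quotient.out q)).image Sum.inl
      | Sum.inr d => {Sum.inr d.1}
    h1 := by
      rintro (q | d)
      · exact (G.h1 _).image _
      · exact (succClasses_nonempty G r d.1 d.2.1 d.2.2).image _
    h2 := by
      rintro (q | d)
      · exact (G.h2 _).image _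
      · exact Finset.singleton_nonempty _
    tr := fun s a1 a2 => match s, a1, a2 with
      | Sum.inl q, Sum.inl b1, Sum.inl b2 => Sum.inr (q, b1, b2)
      | Sum.inl q, _, _ => Sum.inl q
      | Sum.inr d, Sum.inr π', _ => Sum.inl π'
      | Sum.inr d, _, _ => Sum.inl d.1 }

/-- Lower abstract utility: minimum of `u` over the class, `0` at dummy states. -/
noncomputable def lowerU (u : G.S → ℝ) : AbsS G r → ℝ
  | Sum.inl q => sInf (u '' classOf G r q)
  | Sum.inr _ => 0

/-- Upper abstract utility: maximum of `u` over the class, `0` at dummy states. -/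
noncomputable def upperU (u : G.S → ℝ) : AbsS G r → ℝ
  | Sum.inl q => sSup (u '' classOf G r q)
  | Sum.inr _ => 0

end Abstraction

/-!
Let `σ1'` be a player-1 strategy of `G↓`. In `G`, player 1 plays `σ1'` on the abstract history
of classes that corresponds to the concrete history. Against any player-2 strategy `σ2` of `G`,
player 2 of `G↓` can reproduce the concrete play: at class states it plays `σ2` on the concrete
history reconstructed from the abstract one, and at dummy states it picks the class of the actual
successor. Under these two profiles every round of `G` is matched by two rounds of `G↓`, which
collect `u↓(class) ≤ u(state)` and `0`, so the `2n`-step payoff in `G↓` is at most the `n`-step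
payoff in `G`. Taking the infimum over `σ2` and then the supremum over `σ1'` gives both claims.
-/

section Values

variable {H : ConcGame} {act : H.S → Finset H.A}

lemma expVal_succ (v : H.S → ℝ) (σ1 σ2 : Hist H → H.S → H.A → ℝ) (n : ℕ) (s : H.S)
    (h : Hist H) :
    expVal H v σ1 σ2 (n + 1) s h = v s + ∑ a1 ∈ H.act1 s, ∑ a2 ∈ H.act2 s,
      σ1 h s a1 * σ2 h s a2 * expVal H v σ1 σ2 n (H.tr s a1 a2) (h ++ [(s, a1, a2)]) :=
  rfl

noncomputable def uniformStrat (act : H.S → Finset H.A) : Hist H → H.S → H.A → ℝ :=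
  fun _ s a => if a ∈ act s then ((act s).card : ℝ)⁻¹ else 0

lemma uniformStrat_mem (hne : ∀ s, (act s).Nonempty) : uniformStrat act ∈ Strat H act := by
  intro h s
  refine ⟨fun a => by unfold uniformStrat; split <;> positivity, ?_, fun a ha => if_neg ha⟩
  unfold uniformStrat
  rw [Finset.sum_ite_of_true fun a ha => ha, Finset.sum_const, nsmul_eq_mul,
    mul_inv_cancel₀]
  exact_mod_cast (hne s).card_pos.ne'

instance (H : ConcGame) : Nonempty (Strat H H.act1) := ⟨⟨_, uniformStrat_mem H.h1⟩⟩

instance (H : ConcGame) : Nonempty (Strat H H.act2) := ⟨⟨_, uniformStrat_mem H.h2⟩⟩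

lemma abs_sum_strat_mul_le {σ : Hist H → H.S → H.A → ℝ} (hσ : σ ∈ Strat H act)
    (h : Hist H) (s : H.S) {f : H.A → ℝ} {B : ℝ} (hf : ∀ a ∈ act s, |f a| ≤ B) :
    |∑ a ∈ act s, σ h s a * f a| ≤ B := by
  obtain ⟨hnonneg, hsum, -⟩ := hσ h s
  calc |∑ a ∈ act s, σ h s a * f a| ≤ ∑ a ∈ act s, σ h s a * B := by
        refine (Finset.abs_sum_le_sum_abs _ _).trans (Finset.sum_le_sum fun a ha => ?_)
        rw [abs_mul, abs_of_nonneg (hnonneg a)]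
        exact mul_le_mul_of_nonneg_left (hf a ha) (hnonneg a)
    _ = B := by rw [← Finset.sum_mul, hsum, one_mul]

lemma abs_expVal_le (v : H.S → ℝ) {σ1 σ2 : Hist H → H.S → H.A → ℝ}
    (h1 : σ1 ∈ Strat H H.act1) (h2 : σ2 ∈ Strat H H.act2) (n : ℕ) (s : H.S) (h : Hist H) :
    |expVal H v σ1 σ2 n s h| ≤ n * ∑ t, |v t| := by
  induction n generalizing s h with
  | zero => simp [expVal]
  | succ n ih =>
    have hround : |∑ a1 ∈ H.act1 s, ∑ a2 ∈ H.act2 s, σ1 h s a1 * σ2 h s a2 *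
        expVal H v σ1 σ2 n (H.tr s a1 a2) (h ++ [(s, a1, a2)])| ≤ n * ∑ t, |v t| := by
      simp only [mul_assoc, ← Finset.mul_sum]
      exact abs_sum_strat_mul_le h1 h s fun a1 _ =>
        abs_sum_strat_mul_le h2 h s fun a2 _ => ih _ _
    calc |expVal H v σ1 σ2 (n + 1) s h| ≤ |v s| + n * ∑ t, |v t| :=
          (abs_add_le _ _).trans (add_le_add_right hround _)
      _ ≤ (n + 1 : ℕ) * ∑ t, |v t| := by
          push_cast
          linarith [Finset.single_le_sum (fun t _ => abs_nonneg (v t)) (Finset.mem_univ s)]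

noncomputable def guarVal (H : ConcGame) (v : H.S → ℝ) (σ1 : Hist H → H.S → H.A → ℝ)
    (n : ℕ) : ℝ :=
  ⨅ σ2 : Strat H H.act2, expVal H v σ1 σ2.1 n H.s0 []

lemma bddBelow_range_expVal (v : H.S → ℝ) {σ1 : Hist H → H.S → H.A → ℝ}
    (h1 : σ1 ∈ Strat H H.act1) (n : ℕ) :
    BddBelow (Set.range fun σ2 : Strat H H.act2 => expVal H v σ1 σ2.1 n H.s0 []) :=
  ⟨-(n * ∑ t, |v t|), Set.forall_mem_range.2 fun σ2 =>
    neg_le_of_abs_le (abs_expVal_le v h1 σ2.2 n _ _)⟩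

lemma bddAbove_range_guarVal (H : ConcGame) (v : H.S → ℝ) (n : ℕ) :
    BddAbove (Set.range fun σ1 : Strat H H.act1 => guarVal H v σ1.1 n) := by
  let σ2 : Strat H H.act2 := Classical.arbitrary _
  refine ⟨n * ∑ t, |v t|, Set.forall_mem_range.2 fun σ1 => ?_⟩
  exact (ciInf_le (bddBelow_range_expVal v σ1.2 n) σ2).trans
    ((le_abs_self _).trans (abs_expVal_le v σ1.2 σ2.2 n _ _))

end Values

namespace lowerAbs

variable (G : ConcGame) (r : Setoid G.S)

abbrev classState (q : Quotient r) : (lowerAbs G r).S := Sum.inl q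

abbrev dummyState (d : Quotient r × G.A × G.A) : (lowerAbs G r).S := Sum.inr d

abbrev gameAct (a : G.A) : (lowerAbs G r).A := Sum.inl a

abbrev classAct (q : Quotient r) : (lowerAbs G r).A := Sum.inr q

variable {G r}

lemma tr_classState (q : Quotient r) (a1 a2 : G.A) :
    (lowerAbs G r).tr (classState G r q) (gameAct G r a1) (gameAct G r a2) =
      dummyState G r (q, a1, a2) :=
  rfl

lemma tr_dummyState (d : Quotient r × G.A × G.A) (q : Quotient r) :
    (lowerAbs G r).tr (dummyState G r d) (classAct G r d.1) (classAct G r q) = classState G r q :=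
  rfl

lemma mem_act1_classState {q : Quotient r} {b : (lowerAbs G r).A} :
    b ∈ (lowerAbs G r).act1 (classState G r q) ↔ ∃ a ∈ G.act1 q.out, gameAct G r a = b :=
  Finset.mem_image

lemma mem_act2_classState {q : Quotient r} {b : (lowerAbs G r).A} :
    b ∈ (lowerAbs G r).act2 (classState G r q) ↔ ∃ a ∈ G.act2 q.out, gameAct G r a = b :=
  Finset.mem_image

lemma mem_act2_dummyState {d : Quotient r × G.A × G.A} {b : (lowerAbs G r).A} :
    b ∈ (lowerAbs G r).act2 (dummyState G r d) ↔
      ∃ π ∈ succClasses G r d.1 d.2.1 d.2.2, classAct G r π = b :=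
  Finset.mem_image

lemma sum_act1_classState (q : Quotient r) (f : (lowerAbs G r).A → ℝ) :
    ∑ b ∈ (lowerAbs G r).act1 (classState G r q), f b = ∑ a ∈ G.act1 q.out, f (gameAct G r a) :=
  Finset.sum_image Sum.inl_injective.injOn

lemma sum_act2_classState (q : Quotient r) (f : (lowerAbs G r).A → ℝ) :
    ∑ b ∈ (lowerAbs G r).act2 (classState G r q), f b = ∑ a ∈ G.act2 q.out, f (gameAct G r a) :=
  Finset.sum_image Sum.inl_injective.injOn

lemma sum_act1_dummyState (d : Quotient r × G.A × G.A) (f : (lowerAbs G r).A → ℝ) :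
    ∑ b ∈ (lowerAbs G r).act1 (dummyState G r d), f b = f (classAct G r d.1) :=
  Finset.sum_singleton _ _

lemma sum_act2_dummyState (d : Quotient r × G.A × G.A) (f : (lowerAbs G r).A → ℝ) :
    ∑ b ∈ (lowerAbs G r).act2 (dummyState G r d), f b =
      ∑ π ∈ succClasses G r d.1 d.2.1 d.2.2, f (classAct G r π) :=
  Finset.sum_image Sum.inr_injective.injOn

lemma strat_act1_dummyState
    {σ : Hist (lowerAbs G r) → (lowerAbs G r).S → (lowerAbs G r).A → ℝ}
    (hσ : σ ∈ Strat (lowerAbs G r) (lowerAbs G r).act1) (h : Hist (lowerAbs G r))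
    (d : Quotient r × G.A × G.A) : σ h (dummyState G r d) (classAct G r d.1) = 1 := by
  simpa only [sum_act1_dummyState] using (hσ h (dummyState G r d)).2.1

end lowerAbs

open lowerAbs

lemma mk_tr_mem_succClasses (G : ConcGame) (r : Setoid G.S) {s : G.S} {q : Quotient r}
    (hs : Quotient.mk r s = q) (a1 a2 : G.A) :
    Quotient.mk r (G.tr s a1 a2) ∈ succClasses G r q a1 a2 := by
  unfold succClasses
  simp only [Finset.mem_image, Finset.mem_filter, Finset.mem_univ, true_and]
  exact ⟨s, hs, rfl⟩

lemma lowerU_classState_mk_le (G : ConcGame) (r : Setoid G.S) (u : G.S → ℝ) (s : G.S) :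
    lowerU G r u (classState G r ⟦s⟧) ≤ u s :=
  csInf_le (Set.toFinite _).bddBelow ⟨s, rfl, rfl⟩

lemma Compatible.act_out_mk {G : ConcGame} {r : Setoid G.S} (hc : Compatible G r) (s : G.S) :
    G.act1 (Quotient.mk r s).out = G.act1 s ∧ G.act2 (Quotient.mk r s).out = G.act2 s :=
  hc _ _ (Quotient.mk_out s)

section Simulation

variable (G : ConcGame) (r : Setoid G.S)

/-- `h` is a history of `G` from `s` whose recorded states are the actual ones, ending in `t`. -/
def IsRun : Hist G → G.S → G.S → Prop
  | [], s, t => t = s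
  | (s', a1, a2) :: rest, s, t => s' = s ∧ IsRun rest (G.tr s a1 a2) t

variable {G} in
lemma IsRun.append {h : Hist G} {s t : G.S} (hrun : IsRun G h s t) (a1 a2 : G.A) :
    IsRun G (h ++ [(t, a1, a2)]) s (G.tr t a1 a2) := by
  induction h generalizing s with
  | nil => cases hrun; exact ⟨rfl, rfl⟩
  | cons p rest ih => exact ⟨hrun.1, ih hrun.2⟩

abbrev classStep (s : G.S) (a1 a2 : G.A) :
    (lowerAbs G r).S × (lowerAbs G r).A × (lowerAbs G r).A :=
  (classState G r ⟦s⟧, gameAct G r a1, gameAct G r a2)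

abbrev dummyStep (s : G.S) (a1 a2 : G.A) :
    (lowerAbs G r).S × (lowerAbs G r).A × (lowerAbs G r).A :=
  (dummyState G r (⟦s⟧, a1, a2), classAct G r ⟦s⟧, classAct G r ⟦G.tr s a1 a2⟧)

def liftHist : Hist G → Hist (lowerAbs G r)
  | [] => []
  | (s, a1, a2) :: rest => classStep G r s a1 a2 :: dummyStep G r s a1 a2 :: liftHist rest

lemma liftHist_append_singleton (h : Hist G) (s : G.S) (a1 a2 : G.A) :
    liftHist G r (h ++ [(s, a1, a2)]) =
      liftHist G r h ++ [classStep G r s a1 a2, dummyStep G r s a1 a2] := by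
  induction h with
  | nil => rfl
  | cons p rest ih => simp [liftHist, ih]

/-- Replays from `s` the action pairs of the completed rounds, giving the concrete history and the
current concrete state. -/
def unliftHist : G.S → Hist (lowerAbs G r) → Hist G × G.S
  | s, (_, Sum.inl a1, Sum.inl a2) :: _ :: rest =>
      (unliftHist (G.tr s a1 a2) rest).map ((s, a1, a2) :: ·) id
  | s, _ => ([], s)

variable {G r} in
lemma unliftHist_liftHist_append {h : Hist G} {s t : G.S} (hrun : IsRun G h s t)
    {l : Hist (lowerAbs G r)} (hl : l.length ≤ 1) :
    unliftHist G r s (liftHist G r h ++ l) = (h, t) := by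
  induction h generalizing s with
  | nil =>
    cases hrun
    match l, hl with
    | [], _ => rfl
    | [x], _ => obtain ⟨_, _ | _, _ | _⟩ := x <;> rfl
  | cons p rest ih =>
    obtain ⟨s', a1, a2⟩ := p
    obtain ⟨rfl, hrest⟩ := hrun
    simp [liftHist, unliftHist, ih hrest]

noncomputable def concreteStrat1
    (σ1' : Hist (lowerAbs G r) → (lowerAbs G r).S → (lowerAbs G r).A → ℝ) :
    Hist G → G.S → G.A → ℝ :=
  fun h s a => σ1' (liftHist G r h) (classState G r ⟦s⟧) (gameAct G r a)

open Classical in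
/-- Falls back to a representative of `q` when the replayed state is not in `q`, so that the
available actions are always those of `q`. -/
noncomputable def trackedState (q : Quotient r) (h' : Hist (lowerAbs G r)) : G.S :=
  if Quotient.mk r (unliftHist G r G.s0 h').2 = q then (unliftHist G r G.s0 h').2 else q.out

lemma mk_trackedState (q : Quotient r) (h' : Hist (lowerAbs G r)) :
    Quotient.mk r (trackedState G r q h') = q := by
  unfold trackedState
  split
  · assumption
  · exact Quotient.out_eq q

variable {G r} in
lemma trackedState_liftHist_append {h : Hist G} {s : G.S} (hrun : IsRun G h G.s0 s)
    {l : Hist (lowerAbs G r)} (hl : l.length ≤ 1) :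
    trackedState G r ⟦s⟧ (liftHist G r h ++ l) = s := by
  simp [trackedState, unliftHist_liftHist_append hrun hl]

open Classical in
noncomputable def abstractStrat2 (σ2 : Hist G → G.S → G.A → ℝ) :
    Hist (lowerAbs G r) → (lowerAbs G r).S → (lowerAbs G r).A → ℝ
  | h', Sum.inl q, Sum.inl a => σ2 (unliftHist G r G.s0 h').1 (trackedState G r q h') a
  | _, Sum.inl _, Sum.inr _ => 0
  | h', Sum.inr d, b =>
      if b = classAct G r ⟦G.tr (trackedState G r d.1 h') d.2.1 d.2.2⟧ then 1 else 0

lemma abstractStrat2_classState (σ2 : Hist G → G.S → G.A → ℝ) (h' : Hist (lowerAbs G r))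
    (q : Quotient r) (a : G.A) :
    abstractStrat2 G r σ2 h' (classState G r q) (gameAct G r a) =
      σ2 (unliftHist G r G.s0 h').1 (trackedState G r q h') a :=
  rfl

open Classical in
lemma abstractStrat2_dummyState (σ2 : Hist G → G.S → G.A → ℝ) (h' : Hist (lowerAbs G r))
    (d : Quotient r × G.A × G.A) (b : (lowerAbs G r).A) :
    abstractStrat2 G r σ2 h' (dummyState G r d) b =
      if b = classAct G r ⟦G.tr (trackedState G r d.1 h') d.2.1 d.2.2⟧ then 1 else 0 :=
  rfl

variable {G r} (v : (lowerAbs G r).S → ℝ)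
  {σ1' : Hist (lowerAbs G r) → (lowerAbs G r).S → (lowerAbs G r).A → ℝ}
  {σ2 : Hist G → G.S → G.A → ℝ}

lemma concreteStrat1_mem (hc : Compatible G r) (hσ : σ1' ∈ Strat (lowerAbs G r) (lowerAbs G r).act1) :
    concreteStrat1 G r σ1' ∈ Strat G G.act1 := by
  intro h s
  obtain ⟨hnonneg, hsum, hout⟩ := hσ (liftHist G r h) (classState G r ⟦s⟧)
  have hact := (hc.act_out_mk s).1
  rw [sum_act1_classState, hact] at hsum
  refine ⟨fun a => hnonneg _, hsum, fun a ha => hout _ fun hmem => ?_⟩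
  obtain ⟨a', ha', hEq⟩ := mem_act1_classState.1 hmem
  exact ha (hact ▸ Sum.inl_injective hEq ▸ ha')

lemma abstractStrat2_mem (hc : Compatible G r) (hσ : σ2 ∈ Strat G G.act2) :
    abstractStrat2 G r σ2 ∈ Strat (lowerAbs G r) (lowerAbs G r).act2 := by
  rintro h' (q | d)
  · obtain ⟨hnonneg, hsum, hout⟩ := hσ (unliftHist G r G.s0 h').1 (trackedState G r q h')
    have hact : G.act2 q.out = G.act2 (trackedState G r q h') := by
      simpa only [mk_trackedState] using (hc.act_out_mk (trackedState G r q h')).2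
    refine ⟨?_, ?_, ?_⟩
    · rintro (a | π)
      exacts [hnonneg a, le_rfl]
    · rw [sum_act2_classState, hact]
      exact hsum
    · rintro (a | π) hb
      · refine hout a fun ha => hb (mem_act2_classState.2 ⟨a, hact ▸ ha, rfl⟩)
      · rfl
  · have hmem := mem_act2_dummyState.2
      ⟨_, mk_tr_mem_succClasses G r (mk_trackedState G r d.1 h') d.2.1 d.2.2, rfl⟩
    simp only [abstractStrat2]
    refine ⟨fun b => by split_ifs <;> norm_num, ?_, fun b hb => if_neg ?_⟩
    · convert (Finset.sum_ite_eq' _ _ fun _ => (1 : ℝ)).trans (if_pos hmem)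
    · rintro rfl
      exact hb hmem


lemma abstractStrat2_liftHist {h : Hist G} {s : G.S} (hrun : IsRun G h G.s0 s) (a : G.A) :
    abstractStrat2 G r σ2 (liftHist G r h) (classState G r ⟦s⟧) (gameAct G r a) = σ2 h s a := by
  have hl : ([] : Hist (lowerAbs G r)).length ≤ 1 := Nat.zero_le 1
  have hunlift := unliftHist_liftHist_append hrun hl
  have htrack := trackedState_liftHist_append hrun hl
  rw [List.append_nil] at hunlift htrack
  rw [abstractStrat2_classState, hunlift, htrack]

lemma expVal_dummyState (hσ1 : σ1' ∈ Strat (lowerAbs G r) (lowerAbs G r).act1) {h : Hist G}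
    {s : G.S} (hrun : IsRun G h G.s0 s) (a1 a2 : G.A) (m : ℕ) :
    expVal (lowerAbs G r) v σ1' (abstractStrat2 G r σ2) (m + 1)
        (dummyState G r (⟦s⟧, a1, a2)) (liftHist G r h ++ [classStep G r s a1 a2]) =
      v (dummyState G r (⟦s⟧, a1, a2)) + expVal (lowerAbs G r) v σ1' (abstractStrat2 G r σ2) m
        (classState G r ⟦G.tr s a1 a2⟧) (liftHist G r (h ++ [(s, a1, a2)])) := by
  have htrack := trackedState_liftHist_append hrun (l := [classStep G r s a1 a2]) le_rfl
  rw [expVal_succ, sum_act1_dummyState, sum_act2_dummyState, strat_act1_dummyState hσ1]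
  congr 1
  rw [Finset.sum_eq_single_of_mem _ (mk_tr_mem_succClasses G r rfl a1 a2)]
  · rw [abstractStrat2_dummyState, htrack, if_pos rfl, one_mul, one_mul, tr_dummyState,
      liftHist_append_singleton, List.append_assoc]
    rfl
  · intro π _ hπ
    rw [abstractStrat2_dummyState, htrack, if_neg, mul_zero, zero_mul]
    exact fun hEq => hπ (Sum.inr_injective hEq)

lemma expVal_lowerAbs_le (hc : Compatible G r) (u : G.S → ℝ)
    (hv_class : ∀ s, v (classState G r ⟦s⟧) ≤ u s) (hv_dummy : ∀ d, v (dummyState G r d) ≤ 0)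
    (hσ1 : σ1' ∈ Strat (lowerAbs G r) (lowerAbs G r).act1) (hσ2 : σ2 ∈ Strat G G.act2) (n : ℕ)
    {h : Hist G} {s : G.S} (hrun : IsRun G h G.s0 s) :
    expVal (lowerAbs G r) v σ1' (abstractStrat2 G r σ2) (2 * n) (classState G r ⟦s⟧)
        (liftHist G r h) ≤
      expVal G u (concreteStrat1 G r σ1') σ2 n s h := by
  induction n generalizing h s with
  | zero => exact le_rfl
  | succ n ih =>
    rw [show 2 * (n + 1) = 2 * n + 1 + 1 by ring, expVal_succ, expVal_succ]
    simp only [sum_act1_classState, sum_act2_classState, hc.act_out_mk s]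
    refine add_le_add (hv_class s) (Finset.sum_le_sum fun a1 _ => Finset.sum_le_sum fun a2 _ => ?_)
    rw [abstractStrat2_liftHist hrun, tr_classState, expVal_dummyState v hσ1 hrun]
    exact mul_le_mul_of_nonneg_left (add_le_of_nonpos_of_le (hv_dummy _) (ih (hrun.append a1 a2)))
      (mul_nonneg ((hσ1 _ _).1 _) ((hσ2 h s).1 a2))

end Simulation

lemma guarVal_lowerAbs_le (G : ConcGame) (u : G.S → ℝ) (r : Setoid G.S) (hc : Compatible G r)
    {σ1' : Hist (lowerAbs G r) → (lowerAbs G r).S → (lowerAbs G r).A → ℝ}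
    (hσ1 : σ1' ∈ Strat (lowerAbs G r) (lowerAbs G r).act1) (n : ℕ) :
    guarVal (lowerAbs G r) (lowerU G r u) σ1' (2 * n) ≤ guarVal G u (concreteStrat1 G r σ1') n :=
  le_ciInf fun σ2 => ciInf_le_of_le (bddBelow_range_expVal _ hσ1 _)
    ⟨_, abstractStrat2_mem hc σ2.2⟩
    (expVal_lowerAbs_le _ hc u (lowerU_classState_mk_le G r u) (fun _ => le_rfl) hσ1 σ2.2 n
      (h := []) rfl)

/-- Monotonicity of lower-abstraction values: every player-1 strategy of the lower
abstraction `G↓` induces (by following it through corresponding histories) a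
player-1 strategy of `G` whose guaranteed value is at least the guaranteed value
of the original strategy in `G↓`; consequently `υ_{2L}(G↓,u↓) ≤ υ_L(G,u)`. -/
theorem lower_abstraction_monotone (G : ConcGame) (u : G.S → ℝ) (r : Setoid G.S)
    (hc : Compatible G r) (L : ℕ) :
    (∀ σ1' : Strat (lowerAbs G r) (lowerAbs G r).act1,
      ∃ σ1 : Strat G G.act1,
        (⨅ σ2' : Strat (lowerAbs G r) (lowerAbs G r).act2,
            expVal (lowerAbs G r) (lowerU G r u) σ1'.1 σ2'.1 (2 * L)
              (lowerAbs G r).s0 [])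
          ≤ ⨅ σ2 : Strat G G.act2, expVal G u σ1.1 σ2.1 L G.s0 []) ∧
    gval (lowerAbs G r) (lowerU G r u) (2 * L) ≤ gval G u L :=
  ⟨fun σ1' => ⟨⟨_, concreteStrat1_mem hc σ1'.2⟩, guarVal_lowerAbs_le G u r hc σ1'.2 L⟩,
    ciSup_le fun σ1' => (guarVal_lowerAbs_le G u r hc σ1'.2 L).trans
      (le_ciSup (bddAbove_range_guarVal G u L) ⟨_, concreteStrat1_mem hc σ1'.2⟩)⟩
end

section
/- Backward induction correctness for acyclic concurrent games: let (G, u) be a finite acyclic concurrent two-player zero-sum game structure (no state reachable from itself via a nonempty transition sequence, dead-ends allowed). Then for every non-dead-end state s, the value υ(G_s, u) equals the value of the finite matrix game with action sets Γ1(s), Γ2(s) and payoff v(a1, a2) = u(s) + υ(G_{δ(s,a1,a2)}, u); and for every dead-end state s, υ(G_s, u) = u(s). -/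
open scoped BigOperators

/-- A finite acyclic-style concurrent game structure: available-action sets may be
empty (dead-ends). -/
structure AGame where
  S : Type
  A : Type
  [fS : Fintype S]
  [dS : DecidableEq S]
  [fA : Fintype A]
  [dA : DecidableEq A]
  s0 : S
  act1 : S → Finset A
  act2 : S → Finset A
  tr : S → A → A → S

attribute [instance] AGame.fS AGame.dS AGame.fA AGame.dA

/-- One-step transition relation: `s'` is reachable from `s` by some valid
action pair. -/
def AGame.step (G : AGame) (s s' : G.S) : Prop :=
  ∃ a1 ∈ G.act1 s, ∃ a2 ∈ G.act2 s, G.tr s a1 a2 = s'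

/-- Acyclicity: no state is reachable from itself via a nonempty sequence of
transitions. -/
def AGame.Acyclic (G : AGame) : Prop :=
  ∀ s : G.S, ¬ Relation.TransGen G.step s s

/-- Memoryless mixed strategies for action map `act`: at every non-dead-end state,
a probability distribution supported on the available actions. -/
def MStrat (G : AGame) (act : G.S → Finset G.A) : Set (G.S → G.A → ℝ) :=
  {σ | ∀ s, (∀ a, 0 ≤ σ s a) ∧
        ((act s).Nonempty → ∑ a ∈ act s, σ s a = 1) ∧ ∀ a ∉ act s, σ s a = 0}

open Classical in
/-- Expected total utility of the memoryless profile `(σ1, σ2)` from state `s`: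
plays stop at dead-ends; since the game is acyclic, fuel `Fintype.card G.S`
suffices to exhaust every play. -/
noncomputable def aExp (G : AGame) (u : G.S → ℝ) (σ1 σ2 : G.S → G.A → ℝ) :
    ℕ → G.S → ℝ
  | 0, s => u s
  | (n + 1), s =>
      if (G.act1 s).Nonempty ∧ (G.act2 s).Nonempty then
        u s + ∑ a1 ∈ G.act1 s, ∑ a2 ∈ G.act2 s,
          σ1 s a1 * σ2 s a2 * aExp G u σ1 σ2 n (G.tr s a1 a2)
      else u s

/-- The value of the acyclic game started at `s`, over memoryless mixed
strategies. -/
noncomputable def aVal (G : AGame) (u : G.S → ℝ) (s : G.S) : ℝ :=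
  ⨆ σ1 : MStrat G G.act1, ⨅ σ2 : MStrat G G.act2,
    aExp G u σ1.1 σ2.1 (Fintype.card G.S) s

/-- Mixed strategies: probability distributions on a finite action set. -/
def MixedStrat (α : Type) [Fintype α] : Set (α → ℝ) :=
  {p | (∀ a, 0 ≤ p a) ∧ ∑ a, p a = 1}

/-- Expected utility of a mixed strategy pair in a matrix game. -/
noncomputable def expPay {α β : Type} [Fintype α] [Fintype β]
    (v : α → β → ℝ) (p : α → ℝ) (q : β → ℝ) : ℝ :=
  ∑ a, ∑ b, p a * q b * v a b

/-- Maximin value of a finite zero-sum matrix game over mixed strategies. -/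
noncomputable def matVal (α β : Type) [Fintype α] [Fintype β]
    (v : α → β → ℝ) : ℝ :=
  ⨆ p : MixedStrat α, ⨅ q : MixedStrat β, expPay v p.1 q.1

/-!
Let `V` be the value computed by backward induction: `V s = u s` at dead-ends and, elsewhere,
`V s` is the value of the local matrix game with payoffs `u s + V (G.tr s a₁ a₂)`. Against any
memoryless `σ₁`, player 2 can answer at every state with a best response in the local game,
which keeps the expected utility at most `V` by induction along the acyclic structure. Player 1
can play at every state an `ε / |S|`-optimal local strategy; the errors add up along a play,
which visits at most `|S|` states, so player 1 secures `V s - ε`. Hence `υ = V`, and `V`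
satisfies the backward-induction equations by construction.
-/

open Finset

theorem sum_sum_mul_eq_expPay {α β : Type} {s : Finset α} {t : Finset β} (p : α → ℝ) (q : β → ℝ)
    (f : α → β → ℝ) :
    ∑ a ∈ s, ∑ b ∈ t, p a * q b * f a b =
      expPay (fun (a : s) (b : t) => f a b) (fun a => p a) (fun b => q b) := by
  rw [expPay, ← sum_coe_sort s]
  exact sum_congr rfl fun a _ => (sum_coe_sort t (fun b => p a * q b * f a b)).symm

section MatrixGame

variable {α β : Type} [Fintype α] [Fintype β] {v w : α → β → ℝ} {p : α → ℝ} {q : β → ℝ}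

variable (α) in
theorem MixedStrat.nonempty [Nonempty α] : (MixedStrat α).Nonempty := by
  refine ⟨fun _ => (Fintype.card α : ℝ)⁻¹, fun _ => by positivity, ?_⟩
  rw [sum_const, card_univ, nsmul_eq_mul, mul_inv_cancel₀]
  exact_mod_cast Fintype.card_ne_zero

theorem expPay_mono (hp : p ∈ MixedStrat α) (hq : q ∈ MixedStrat β) (h : ∀ a b, v a b ≤ w a b) :
    expPay v p q ≤ expPay w p q :=
  sum_le_sum fun a _ => sum_le_sum fun b _ =>
    mul_le_mul_of_nonneg_left (h a b) (mul_nonneg (hp.1 a) (hq.1 b))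

theorem expPay_const (hp : p ∈ MixedStrat α) (hq : q ∈ MixedStrat β) (c : ℝ) :
    expPay (fun _ _ => c) p q = c := by
  simp only [expPay, ← sum_mul, ← mul_sum, hq.2, mul_one, hp.2, one_mul]

theorem expPay_add_const (hp : p ∈ MixedStrat α) (hq : q ∈ MixedStrat β) (c : ℝ) :
    expPay (fun a b => v a b + c) p q = expPay v p q + c := by
  have hc := expPay_const hp hq c
  simp only [expPay] at hc ⊢
  simp only [mul_add, sum_add_distrib, hc]

theorem expPay_const_add (hp : p ∈ MixedStrat α) (hq : q ∈ MixedStrat β) (c : ℝ) :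
    expPay (fun a b => c + v a b) p q = c + expPay v p q := by
  simp only [add_comm c, expPay_add_const hp hq]

theorem abs_expPay_le (hp : p ∈ MixedStrat α) (hq : q ∈ MixedStrat β) {M : ℝ}
    (h : ∀ a b, |v a b| ≤ M) : |expPay v p q| ≤ M := by
  refine abs_le.2 ⟨?_, ?_⟩
  · exact (expPay_const hp hq (-M)).symm.trans_le
      (expPay_mono hp hq fun a b => (abs_le.1 (h a b)).1)
  · exact (expPay_mono hp hq fun a b => (abs_le.1 (h a b)).2).trans_eq (expPay_const hp hq M)

theorem bddBelow_range_expPay (v : α → β → ℝ) (hp : p ∈ MixedStrat α) :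
    BddBelow (Set.range fun q : MixedStrat β => expPay v p q) := by
  obtain ⟨m, hm⟩ := (Set.finite_range (Function.uncurry v)).bddBelow
  refine ⟨m, ?_⟩
  rintro _ ⟨q, rfl⟩
  rw [← expPay_const hp q.2 m]
  exact expPay_mono hp q.2 fun a b => hm ⟨(a, b), rfl⟩

theorem expPay_le_matVal (hp : p ∈ MixedStrat α) (hq : q ∈ MixedStrat β)
    (hbest : ∀ q' ∈ MixedStrat β, expPay v p q ≤ expPay v p q') :
    expPay v p q ≤ matVal α β v := by
  have : Nonempty (MixedStrat β) := ⟨⟨q, hq⟩⟩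
  obtain ⟨M, hM⟩ := (Set.finite_range (Function.uncurry v)).bddAbove
  refine le_ciSup_of_le ⟨M, ?_⟩ ⟨p, hp⟩ (le_ciInf fun q' => hbest q'.1 q'.2)
  rintro _ ⟨p', rfl⟩
  refine ciInf_le_of_le (bddBelow_range_expPay v p'.2) ⟨q, hq⟩ ?_
  rw [← expPay_const p'.2 hq M]
  exact expPay_mono p'.2 hq fun a b => hM ⟨(a, b), rfl⟩

theorem exists_lt_expPay_of_lt_matVal [Nonempty α] {c : ℝ} (h : c < matVal α β v) :
    ∃ p ∈ MixedStrat α, ∀ q ∈ MixedStrat β, c < expPay v p q := by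
  have := (MixedStrat.nonempty α).to_subtype
  obtain ⟨p, hp⟩ := exists_lt_of_lt_ciSup h
  exact ⟨p, p.2, fun q hq =>
    hp.trans_le (ciInf_le_of_le (bddBelow_range_expPay v p.2) ⟨q, hq⟩ le_rfl)⟩

theorem exists_best_response [Nonempty β] (v : α → β → ℝ) (p : α → ℝ) :
    ∃ q ∈ MixedStrat β, ∀ q' ∈ MixedStrat β, expPay v p q ≤ expPay v p q' := by
  classical
  set col : β → ℝ := fun b => ∑ a, p a * v a b
  have hcol : ∀ q, expPay v p q = ∑ b, q b * col b := fun q => by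
    rw [expPay, sum_comm]
    exact sum_congr rfl fun b _ => by rw [mul_sum]; exact sum_congr rfl fun a _ => by ring
  obtain ⟨b, -, hb⟩ := exists_min_image univ col univ_nonempty
  refine ⟨Pi.single b 1, ⟨fun b' => ?_, by simp⟩, fun q' hq' => ?_⟩
  · rcases eq_or_ne b' b with rfl | h <;> simp [*]
  · rw [hcol, hcol]
    calc ∑ b', (Pi.single b 1 : β → ℝ) b' * col b' = col b := by simp [Pi.single_apply]
      _ = ∑ b', q' b' * col b := by rw [← sum_mul, hq'.2, one_mul]
      _ ≤ ∑ b', q' b' * col b' :=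
          sum_le_sum fun b' _ => mul_le_mul_of_nonneg_left (hb b' (mem_univ _)) (hq'.1 b')

end MatrixGame

namespace MStrat

variable {G : AGame} {act : G.S → Finset G.A}

theorem restrict_mem {σ : G.S → G.A → ℝ} (hσ : σ ∈ MStrat G act) {s : G.S}
    (hs : (act s).Nonempty) : (fun a : act s => σ s a) ∈ MixedStrat (act s) :=
  ⟨fun a => (hσ s).1 a, (sum_coe_sort (act s) (σ s)).trans ((hσ s).2.1 hs)⟩

theorem exists_of_local (P : (s : G.S) → (act s → ℝ) → Prop)
    (h : ∀ s, (act s).Nonempty → ∃ p ∈ MixedStrat (act s), P s p) :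
    ∃ σ ∈ MStrat G act, ∀ s, (act s).Nonempty → P s fun a => σ s a := by
  classical
  have h' : ∀ s, ∃ p, (act s).Nonempty → p ∈ MixedStrat (act s) ∧ P s p := fun s => by
    by_cases hs : (act s).Nonempty
    · obtain ⟨p, hp, hP⟩ := h s hs
      exact ⟨p, fun _ => ⟨hp, hP⟩⟩
    · exact ⟨0, fun hs' => absurd hs' hs⟩
  choose p hp using h'
  set σ : G.S → G.A → ℝ := fun s a => if ha : a ∈ act s then p s ⟨a, ha⟩ else 0
  have hres : ∀ s, (fun a : act s => σ s a) = p s := fun s => funext fun a => dif_pos a.2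
  refine ⟨σ, fun s => ⟨fun a => ?_, fun hs => ?_, fun a ha => dif_neg ha⟩, fun s hs => ?_⟩
  · by_cases ha : a ∈ act s
    · simpa only [σ, dif_pos ha] using (hp s ⟨a, ha⟩).1.1 _
    · simp only [σ, dif_neg ha, le_refl]
  · rw [← sum_coe_sort, ← (hp s hs).1.2]
    exact sum_congr rfl fun a _ => congrFun (hres s) a
  · exact hres s ▸ (hp s hs).2

variable (act) in
theorem nonempty : (MStrat G act).Nonempty := by
  obtain ⟨σ, hσ, -⟩ := exists_of_local (act := act) (fun _ _ => True) fun s hs =>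
    have := hs.coe_sort
    ⟨_, (MixedStrat.nonempty _).some_mem, trivial⟩
  exact ⟨σ, hσ⟩

end MStrat

namespace AGame

variable (G : AGame)

abbrev Live (s : G.S) : Prop := (G.act1 s).Nonempty ∧ (G.act2 s).Nonempty

open Classical in
noncomputable def descendants (s : G.S) : Finset G.S :=
  univ.filter (Relation.ReflTransGen G.step s)

noncomputable def height (s : G.S) : ℕ := (G.descendants s).card

variable {G}

theorem mem_descendants {s t : G.S} : t ∈ G.descendants s ↔ Relation.ReflTransGen G.step s t := by
  simp [descendants]

theorem one_le_height (s : G.S) : 1 ≤ G.height s :=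
  card_pos.2 ⟨s, mem_descendants.2 .refl⟩

theorem height_le_card (s : G.S) : G.height s ≤ Fintype.card G.S := card_le_univ _

theorem Acyclic.height_tr_lt (hacyc : G.Acyclic) {s : G.S} {a1 a2 : G.A}
    (h1 : a1 ∈ G.act1 s) (h2 : a2 ∈ G.act2 s) : G.height (G.tr s a1 a2) < G.height s := by
  have hstep : G.step s (G.tr s a1 a2) := ⟨a1, h1, a2, h2, rfl⟩
  refine card_lt_card (_root_.ssubset_iff_subset_ne.2 ⟨fun t ht => ?_, fun heq => ?_⟩)
  · exact mem_descendants.2 (.head hstep (mem_descendants.1 ht))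
  · have hs : s ∈ G.descendants (G.tr s a1 a2) := heq ▸ mem_descendants.2 .refl
    exact hacyc s (.head' hstep (mem_descendants.1 hs))

theorem Acyclic.induction (hacyc : G.Acyclic) {P : G.S → Prop}
    (h : ∀ s, (∀ a1 ∈ G.act1 s, ∀ a2 ∈ G.act2 s, P (G.tr s a1 a2)) → P s) (s : G.S) : P s :=
  (measure G.height).wf.induction s fun s ih =>
    h s fun _ h1 _ h2 => ih _ (hacyc.height_tr_lt h1 h2)

section Unroll

variable {β : Type*}

variable (G) in
open Classical in
/-- Backward induction with fuel `n`; both `aExp` and `backwardValue` are instances, so that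
fuel `Fintype.card G.S` is shown to suffice only once. -/
noncomputable def unroll (u : G.S → β) (Φ : (s : G.S) → (G.A → G.A → β) → β) :
    ℕ → G.S → β
  | 0, s => u s
  | n + 1, s => if G.Live s then Φ s (fun a1 a2 => unroll u Φ n (G.tr s a1 a2)) else u s

variable {u : G.S → β} {Φ : (s : G.S) → (G.A → G.A → β) → β}

theorem unroll_of_not_live {s : G.S} (h : ¬ G.Live s) (n : ℕ) : G.unroll u Φ n s = u s := by
  cases n <;> simp [unroll, h]

theorem unroll_succ_of_live {s : G.S} (h : G.Live s) (n : ℕ) :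
    G.unroll u Φ (n + 1) s = Φ s (fun a1 a2 => G.unroll u Φ n (G.tr s a1 a2)) := by
  simp [unroll, h]

variable (G) in
def IsLocal (Φ : (s : G.S) → (G.A → G.A → β) → β) : Prop :=
  ∀ s f g, (∀ a1 ∈ G.act1 s, ∀ a2 ∈ G.act2 s, f a1 a2 = g a1 a2) → Φ s f = Φ s g

theorem Acyclic.unroll_eq_of_height_le (hacyc : G.Acyclic) (hΦ : G.IsLocal Φ) (s : G.S) :
    ∀ n m, G.height s ≤ n + 1 → G.height s ≤ m + 1 → G.unroll u Φ n s = G.unroll u Φ m s := by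
  induction s using hacyc.induction with
  | h s ih =>
    intro n m hn hm
    by_cases hs : G.Live s
    · obtain ⟨a1, h1⟩ := hs.1
      obtain ⟨a2, h2⟩ := hs.2
      have := hacyc.height_tr_lt h1 h2
      have := one_le_height (G.tr s a1 a2)
      obtain ⟨n, rfl⟩ : ∃ n', n = n' + 1 := ⟨n - 1, by omega⟩
      obtain ⟨m, rfl⟩ : ∃ m', m = m' + 1 := ⟨m - 1, by omega⟩
      rw [unroll_succ_of_live hs, unroll_succ_of_live hs]
      refine hΦ s _ _ fun a1 h1 a2 h2 => ih a1 h1 a2 h2 n m ?_ ?_ <;>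
        have := hacyc.height_tr_lt h1 h2 <;> omega
    · rw [unroll_of_not_live hs, unroll_of_not_live hs]

theorem Acyclic.unroll_card_of_live (hacyc : G.Acyclic) (hΦ : G.IsLocal Φ) {s : G.S}
    (h : G.Live s) :
    G.unroll u Φ (Fintype.card G.S) s =
      Φ s (fun a1 a2 => G.unroll u Φ (Fintype.card G.S) (G.tr s a1 a2)) := by
  have := Fintype.card_pos_iff.2 ⟨s⟩
  obtain ⟨M, hM⟩ : ∃ M, Fintype.card G.S = M + 1 := ⟨Fintype.card G.S - 1, by omega⟩
  rw [hM, unroll_succ_of_live h]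
  refine hΦ s _ _ fun a1 h1 a2 h2 => hacyc.unroll_eq_of_height_le hΦ _ _ _ ?_ ?_ <;>
    have := hacyc.height_tr_lt h1 h2 <;> have := height_le_card s <;> omega

end Unroll

section Value

variable {u : G.S → ℝ} {σ1 σ2 : G.S → G.A → ℝ}

theorem aExp_of_not_live {s : G.S} (h : ¬ G.Live s) (n : ℕ) : aExp G u σ1 σ2 n s = u s := by
  cases n <;> simp [aExp, h]

theorem aExp_succ_of_live {s : G.S} (h : G.Live s) (n : ℕ) :
    aExp G u σ1 σ2 (n + 1) s = u s + expPay (fun (a1 : G.act1 s) (a2 : G.act2 s) =>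
      aExp G u σ1 σ2 n (G.tr s a1 a2)) (fun a => σ1 s a) (fun a => σ2 s a) := by
  rw [aExp, if_pos h, sum_sum_mul_eq_expPay]

theorem aExp_eq_unroll :
    aExp G u σ1 σ2 = G.unroll u fun s f =>
      u s + expPay (fun (a1 : G.act1 s) (a2 : G.act2 s) => f a1 a2)
        (fun a => σ1 s a) (fun a => σ2 s a) := by
  funext n s
  induction n generalizing s with
  | zero => rfl
  | succ n ih =>
    by_cases h : G.Live s
    · simp only [aExp_succ_of_live h, unroll_succ_of_live h, ih]
    · rw [aExp_of_not_live h, unroll_of_not_live h]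

variable (G) in
def localGame (u w : G.S → ℝ) (s : G.S) : G.act1 s → G.act2 s → ℝ :=
  fun a1 a2 => u s + w (G.tr s a1 a2)

theorem Acyclic.aExp_card_eq_expPay (hacyc : G.Acyclic) (hσ1 : σ1 ∈ MStrat G G.act1)
    (hσ2 : σ2 ∈ MStrat G G.act2) {s : G.S} (h : G.Live s) :
    aExp G u σ1 σ2 (Fintype.card G.S) s =
      expPay (G.localGame u (aExp G u σ1 σ2 (Fintype.card G.S)) s)
        (fun a => σ1 s a) (fun a => σ2 s a) := by
  rw [aExp_eq_unroll, hacyc.unroll_card_of_live (fun t f g hfg => ?_) h]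
  · exact (expPay_const_add (MStrat.restrict_mem hσ1 h.1)
      (MStrat.restrict_mem hσ2 h.2) _).symm
  · congr 2
    funext a1 a2
    exact hfg _ a1.2 _ a2.2

theorem abs_aExp_le (hσ1 : σ1 ∈ MStrat G G.act1) (hσ2 : σ2 ∈ MStrat G G.act2) (n : ℕ)
    (s : G.S) : |aExp G u σ1 σ2 n s| ≤ (n + 1) * ∑ t, |u t| := by
  have hu : ∀ t, |u t| ≤ ∑ t, |u t| := fun t =>
    single_le_sum (f := fun t => |u t|) (fun _ _ => abs_nonneg _) (mem_univ t)
  have hC : 0 ≤ ∑ t, |u t| := (abs_nonneg _).trans (hu s)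
  induction n generalizing s with
  | zero => simpa [aExp] using hu s
  | succ n ih =>
    by_cases h : G.Live s
    · rw [aExp_succ_of_live h]
      refine (abs_add_le _ _).trans ?_
      have hexp := abs_expPay_le (MStrat.restrict_mem hσ1 h.1)
        (MStrat.restrict_mem hσ2 h.2) fun a1 a2 => ih (G.tr s a1 a2)
      push_cast
      linarith [hu s]
    · rw [aExp_of_not_live h]
      push_cast
      nlinarith [hu s]

theorem bddBelow_range_aExp (hσ1 : σ1 ∈ MStrat G G.act1) (n : ℕ) (s : G.S) :
    BddBelow (Set.range fun σ2 : MStrat G G.act2 => aExp G u σ1 σ2 n s) := by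
  refine ⟨-((n + 1) * ∑ t, |u t|), ?_⟩
  rintro _ ⟨σ2, rfl⟩
  exact neg_le_of_abs_le (abs_aExp_le hσ1 σ2.2 n s)

theorem aVal_le_of_forall_exists {s : G.S} {c : ℝ}
    (h : ∀ σ1 ∈ MStrat G G.act1, ∃ σ2 ∈ MStrat G G.act2,
      aExp G u σ1 σ2 (Fintype.card G.S) s ≤ c) : aVal G u s ≤ c := by
  have := (MStrat.nonempty G.act1).to_subtype
  refine ciSup_le fun σ1 => ?_
  obtain ⟨σ2, hσ2, hle⟩ := h σ1.1 σ1.2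
  exact ciInf_le_of_le (bddBelow_range_aExp σ1.2 _ s) ⟨σ2, hσ2⟩ hle

theorem le_aVal_of_forall (hσ1 : σ1 ∈ MStrat G G.act1) {s : G.S} {c : ℝ}
    (h : ∀ σ2 ∈ MStrat G G.act2, c ≤ aExp G u σ1 σ2 (Fintype.card G.S) s) : c ≤ aVal G u s := by
  obtain ⟨σ2, hσ2⟩ := MStrat.nonempty G.act2
  have : Nonempty (MStrat G G.act2) := ⟨⟨σ2, hσ2⟩⟩
  refine le_ciSup_of_le ⟨(Fintype.card G.S + 1) * ∑ t, |u t|, ?_⟩ ⟨σ1, hσ1⟩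
    (le_ciInf fun σ2 => h σ2.1 σ2.2)
  rintro _ ⟨σ1', rfl⟩
  exact ciInf_le_of_le (bddBelow_range_aExp σ1'.2 _ s) ⟨σ2, hσ2⟩
    (le_of_abs_le (abs_aExp_le σ1'.2 hσ2 _ s))

variable (G) in
noncomputable def backwardValue (u : G.S → ℝ) : G.S → ℝ :=
  G.unroll u (fun s f => matVal (G.act1 s) (G.act2 s) fun a1 a2 => u s + f a1 a2)
    (Fintype.card G.S)

theorem backwardValue_of_not_live {s : G.S} (h : ¬ G.Live s) : G.backwardValue u s = u s :=
  unroll_of_not_live h _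

theorem Acyclic.backwardValue_of_live (hacyc : G.Acyclic) {s : G.S} (h : G.Live s) :
    G.backwardValue u s =
      matVal (G.act1 s) (G.act2 s) (G.localGame u (G.backwardValue u) s) := by
  refine hacyc.unroll_card_of_live (fun t f g hfg => ?_) h
  congr 1
  funext a1 a2
  rw [hfg _ a1.2 _ a2.2]

theorem Acyclic.aVal_le_backwardValue (hacyc : G.Acyclic) (s : G.S) :
    aVal G u s ≤ G.backwardValue u s := by
  refine aVal_le_of_forall_exists fun σ1 hσ1 => ?_
  obtain ⟨σ2, hσ2, hbest⟩ := MStrat.exists_of_local (act := G.act2)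
    (fun t q => ∀ q' ∈ MixedStrat (G.act2 t),
      expPay (G.localGame u (G.backwardValue u) t) (fun a => σ1 t a) q ≤
        expPay (G.localGame u (G.backwardValue u) t) (fun a => σ1 t a) q')
    fun t ht => have := ht.coe_sort; exists_best_response _ _
  refine ⟨σ2, hσ2, ?_⟩
  induction s using hacyc.induction with
  | h t ih =>
    by_cases ht : G.Live t
    · have hp := MStrat.restrict_mem hσ1 ht.1
      have hq := MStrat.restrict_mem hσ2 ht.2
      calc aExp G u σ1 σ2 (Fintype.card G.S) t
          = expPay (G.localGame u (aExp G u σ1 σ2 (Fintype.card G.S)) t)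
              (fun a => σ1 t a) (fun a => σ2 t a) := hacyc.aExp_card_eq_expPay hσ1 hσ2 ht
        _ ≤ expPay (G.localGame u (G.backwardValue u) t) (fun a => σ1 t a) (fun a => σ2 t a) :=
            expPay_mono hp hq fun a1 a2 => add_le_add_right (ih _ a1.2 _ a2.2) _
        _ ≤ G.backwardValue u t :=
            hacyc.backwardValue_of_live ht ▸ expPay_le_matVal hp hq (hbest t ht.2)
    · rw [aExp_of_not_live ht, backwardValue_of_not_live ht]

variable (G) in
def IsLocallyNearOptimal (u : G.S → ℝ) (δ : ℝ) (σ1 : G.S → G.A → ℝ) : Prop :=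
  ∀ s, G.Live s → ∀ q ∈ MixedStrat (G.act2 s),
    G.backwardValue u s - δ ≤ expPay (G.localGame u (G.backwardValue u) s) (fun a => σ1 s a) q

theorem Acyclic.exists_isLocallyNearOptimal (hacyc : G.Acyclic) {δ : ℝ} (hδ : 0 < δ) :
    ∃ σ1 ∈ MStrat G G.act1, G.IsLocallyNearOptimal u δ σ1 := by
  obtain ⟨σ1, hσ1, hgood⟩ := MStrat.exists_of_local (act := G.act1)
    (fun s p => G.Live s → ∀ q ∈ MixedStrat (G.act2 s),
      G.backwardValue u s - δ ≤ expPay (G.localGame u (G.backwardValue u) s) p q)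
    fun s hs1 => by
      have := hs1.coe_sort
      by_cases hs : G.Live s
      · obtain ⟨p, hp, hlt⟩ := exists_lt_expPay_of_lt_matVal
          ((sub_lt_self _ hδ).trans_eq (hacyc.backwardValue_of_live hs))
        exact ⟨p, hp, fun _ q hq => (hlt q hq).le⟩
      · exact ⟨_, (MixedStrat.nonempty _).some_mem, fun h => absurd h hs⟩
  exact ⟨σ1, hσ1, fun s hs => hgood s hs.1 hs⟩

theorem Acyclic.backwardValue_le_aExp_add (hacyc : G.Acyclic) {δ : ℝ} (hδ : 0 ≤ δ)
    (hσ1 : σ1 ∈ MStrat G G.act1) (hσ2 : σ2 ∈ MStrat G G.act2)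
    (hopt : G.IsLocallyNearOptimal u δ σ1) (t : G.S) :
    G.backwardValue u t ≤ aExp G u σ1 σ2 (Fintype.card G.S) t + δ * G.height t := by
  induction t using hacyc.induction with
  | h t ih =>
    by_cases ht : G.Live t
    · have hp := MStrat.restrict_mem hσ1 ht.1
      have hq := MStrat.restrict_mem hσ2 ht.2
      have hsucc : ∀ (a1 : G.act1 t) (a2 : G.act2 t),
          G.localGame u (G.backwardValue u) t a1 a2 ≤
            G.localGame u (aExp G u σ1 σ2 (Fintype.card G.S)) t a1 a2 +
              δ * (G.height t - 1) := fun a1 a2 => by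
        have hh : (G.height (G.tr t a1 a2) : ℝ) ≤ G.height t - 1 := by
          rw [le_sub_iff_add_le]
          exact_mod_cast hacyc.height_tr_lt a1.2 a2.2
        simp only [localGame]
        nlinarith [ih _ a1.2 _ a2.2]
      calc G.backwardValue u t
          ≤ expPay (G.localGame u (G.backwardValue u) t)
              (fun a => σ1 t a) (fun a => σ2 t a) + δ := by
            linarith [hopt t ht _ hq]
        _ ≤ expPay (fun a1 a2 => G.localGame u (aExp G u σ1 σ2 (Fintype.card G.S)) t a1 a2 +
              δ * (G.height t - 1)) (fun a => σ1 t a) (fun a => σ2 t a) + δ := by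
            gcongr
            exact expPay_mono hp hq hsucc
        _ = aExp G u σ1 σ2 (Fintype.card G.S) t + δ * G.height t := by
            rw [expPay_add_const hp hq, ← hacyc.aExp_card_eq_expPay hσ1 hσ2 ht]
            ring
    · rw [aExp_of_not_live ht, backwardValue_of_not_live ht]
      have : 0 ≤ δ * G.height t := by positivity
      linarith

theorem Acyclic.backwardValue_le_aVal (hacyc : G.Acyclic) (s : G.S) :
    G.backwardValue u s ≤ aVal G u s := by
  refine le_of_forall_pos_le_add fun ε hε => ?_
  have hcard : (0 : ℝ) < Fintype.card G.S := by exact_mod_cast Fintype.card_pos_iff.2 ⟨s⟩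
  set δ := ε / Fintype.card G.S
  have hδ : 0 < δ := div_pos hε hcard
  obtain ⟨σ1, hσ1, hopt⟩ := hacyc.exists_isLocallyNearOptimal (u := u) hδ
  have hδs : δ * G.height s ≤ ε := by
    calc δ * G.height s ≤ δ * Fintype.card G.S := by
          gcongr
          exact_mod_cast height_le_card s
      _ = ε := div_mul_cancel₀ ε hcard.ne'
  have := le_aVal_of_forall hσ1 (c := G.backwardValue u s - ε) fun σ2 hσ2 => by
    linarith [hacyc.backwardValue_le_aExp_add hδ.le hσ1 hσ2 hopt s]
  linarith

theorem Acyclic.aVal_eq_backwardValue (hacyc : G.Acyclic) (u : G.S → ℝ) :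
    aVal G u = G.backwardValue u :=
  funext fun s => (hacyc.aVal_le_backwardValue s).antisymm (hacyc.backwardValue_le_aVal s)

end Value

end AGame

/-- Backward induction correctness for acyclic concurrent games: at every
non-dead-end state the value equals the value of the local matrix game with
payoffs `u(s) + υ(G_{δ(s,a1,a2)}, u)`, and at every dead-end state the value is
`u(s)`. -/
theorem backward_induction (G : AGame) (hacyc : G.Acyclic) (u : G.S → ℝ) :
    (∀ s : G.S, (G.act1 s).Nonempty → (G.act2 s).Nonempty →
      aVal G u s =
        matVal {a // a ∈ G.act1 s} {a // a ∈ G.act2 s}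
          (fun a1 a2 => u s + aVal G u (G.tr s a1.1 a2.1))) ∧
    (∀ s : G.S, ¬ ((G.act1 s).Nonempty ∧ (G.act2 s).Nonempty) →
      aVal G u s = u s) := by
  rw [hacyc.aVal_eq_backwardValue u]
  exact ⟨fun s h1 h2 => hacyc.backwardValue_of_live ⟨h1, h2⟩,
    fun s h => AGame.backwardValue_of_not_live h⟩
end
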